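/- A monoid presentation satisfying C(3) satisfies C(4) if and only if for every relation word R' = X_{R'} Y_{R'} Z_{R'} (with X_{R'}, Z_{R'} the maximal piece prefix and suffix), the middle word Y_{R'} is not a piece. -/
import Mathlib


variable {A : Type*}

/-- `w` is a relation word of the presentation `rels`: it appears as one side of a
relation. -/
def IsRelWord (rels : Set (List A × List A)) (w : List A) : Prop :=
  ∃ p ∈ rels, w = p.1 ∨ w = p.2

/-- `p` is a piece: it occurs as a factor of the relation words in two different places
(in two different relation words, or in two different positions in the same one). -/
def IsPiece (rels : Set (List A × List A)) (p : List A) : Prop :=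
  ∃ w₁ w₂ a₁ b₁ a₂ b₂ : List A, IsRelWord rels w₁ ∧ IsRelWord rels w₂ ∧
    w₁ = a₁ ++ p ++ b₁ ∧ w₂ = a₂ ++ p ++ b₂ ∧ (w₁ ≠ w₂ ∨ a₁ ≠ a₂)

/-- The presentation satisfies `C(m)`: no relation word is a product of strictly fewer than
`m` pieces. -/
def SatisfiesC (rels : Set (List A × List A)) (m : ℕ) : Prop :=
  ∀ w, IsRelWord rels w → ∀ l : List (List A),
    (∀ p ∈ l, IsPiece rels p) → l.length < m → w ≠ l.flatten

/-- `X` is the maximal (longest) piece prefix of `w`. -/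
def IsMaxPiecePrefix (rels : Set (List A × List A)) (w X : List A) : Prop :=
  IsPiece rels X ∧ X <+: w ∧ ∀ p, IsPiece rels p → p <+: w → p.length ≤ X.length

/-- `Z` is the maximal (longest) piece suffix of `w`. -/
def IsMaxPieceSuffix (rels : Set (List A × List A)) (w Z : List A) : Prop :=
  IsPiece rels Z ∧ Z <:+ w ∧ ∀ p, IsPiece rels p → p <:+ w → p.length ≤ Z.length

/-- An infix (factor) of a piece is again a piece. -/
lemma IsPiece.of_infix {rels : Set (List A × List A)} {p q : List A}
    (hp : IsPiece rels p) (hq : q <:+: p) : IsPiece rels q := by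
  obtain ⟨w₁, w₂, a₁, b₁, a₂, b₂, hw₁, hw₂, he₁, he₂, hd⟩ := hp
  obtain ⟨u, v, huv⟩ := hq
  refine ⟨w₁, w₂, a₁ ++ u, v ++ b₁, a₂ ++ u, v ++ b₂, hw₁, hw₂, ?_, ?_, ?_⟩
  · rw [he₁, ← huv]; simp
  · rw [he₂, ← huv]; simp
  · rcases hd with h | h
    · exact Or.inl h
    · exact Or.inr fun hh => h (List.append_cancel_right hh)

/-- A segment of `w` contained in another segment of `w` is an infix of it. -/
lemma seg_infix_seg (w : List A) (i k i' k' : ℕ) (h1 : i' ≤ i) (h2 : i + k ≤ i' + k') :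
    (w.drop i).take k <:+: (w.drop i').take k' := by
  have key : (w.drop i).take k
      = ((((w.drop i').take k').drop (i - i')).take k) := by
    rw [List.drop_take, List.drop_drop, List.take_take]
    have hi : i' + (i - i') = i := by omega
    rw [hi]
    congr 1
    omega
  rw [key]
  exact ((List.take_prefix _ _).isInfix).trans
    (((List.drop_suffix _ _).isInfix))

/-- A `C(3)` presentation satisfies `C(4)` if and only if for every relation word
`w = X ++ Y ++ Z` with `X` the maximal piece prefix and `Z` the maximal piece suffix, the
middle word `Y` is not a piece. -/
theorem c4_iff_middle_not_piece {A : Type*} [Fintype A] (rels : Set (List A × List A))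
    (hfin : rels.Finite) (h3 : SatisfiesC rels 3) :
    SatisfiesC rels 4 ↔
      ∀ w X Y Z : List A, IsRelWord rels w → w = X ++ Y ++ Z →
        IsMaxPiecePrefix rels w X → IsMaxPieceSuffix rels w Z → ¬ IsPiece rels Y := by
  classical
  constructor
  · intro h4 w X Y Z hw hdec hX hZ hY
    exact h4 w hw [X, Y, Z] (by rintro p hp; simp at hp
                                rcases hp with h | h | h <;> subst h
                                exacts [hX.1, hY, hZ.1])
      (by simp) (by simpa using hdec)
  · intro H w hw l hl hlen heq
    -- l has length 0,1,2 or 3; small cases handled by h3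
    by_cases hlen3 : l.length < 3
    · exact h3 w hw l hl hlen3 heq
    have hlen3' : l.length = 3 := by omega
    obtain ⟨P₁, P₂, P₃, rfl⟩ : ∃ a b c, l = [a, b, c] := by
      match l, hlen3' with
      | [a, b, c], _ => exact ⟨a, b, c, rfl⟩
    have hP₁ : IsPiece rels P₁ := hl _ (by simp)
    have hP₂ : IsPiece rels P₂ := hl _ (by simp)
    have hP₃ : IsPiece rels P₃ := hl _ (by simp)
    have hwe : w = P₁ ++ P₂ ++ P₃ := by simpa using heq
    have hwlen : w.length = P₁.length + P₂.length + P₃.length := by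
      simp [hwe]
      omega
    -- maximal piece prefix
    set NX := Nat.findGreatest (fun n => IsPiece rels (w.take n)) w.length with hNX
    set NZ := Nat.findGreatest (fun n => IsPiece rels (w.drop (w.length - n))) w.length
      with hNZ
    have htake1 : w.take P₁.length = P₁ := by
      rw [hwe]; simp [List.take_append]
    have hdrop3 : w.drop (w.length - P₃.length) = P₃ := by
      rw [hwe]
      have : (P₁ ++ P₂ ++ P₃).length - P₃.length = (P₁ ++ P₂).length := by
        simp
        omega
      rw [this, List.drop_left]
    have hNX_piece : IsPiece rels (w.take NX) :=
      Nat.findGreatest_spec (P := fun n => IsPiece rels (w.take n))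
        (by rw [hwlen]; omega) (htake1 ▸ hP₁)
    have hNZ_piece : IsPiece rels (w.drop (w.length - NZ)) :=
      Nat.findGreatest_spec (P := fun n => IsPiece rels (w.drop (w.length - n)))
        (by rw [hwlen]; omega) (hdrop3 ▸ hP₃)
    have hNX_le : NX ≤ w.length := Nat.findGreatest_le _
    have hNZ_le : NZ ≤ w.length := Nat.findGreatest_le _
    set X := w.take NX with hXdef
    set Z := w.drop (w.length - NZ) with hZdef
    have hXlen : X.length = NX := by simp [hXdef]; omega
    have hZlen : Z.length = NZ := by simp [hZdef]; omega
    have hXmax : IsMaxPiecePrefix rels w X := by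
      refine ⟨hNX_piece, List.take_prefix _ _, fun p hp hpw => ?_⟩
      rw [hXlen]
      exact Nat.le_findGreatest hpw.length_le
        (by rw [← List.prefix_iff_eq_take.mp hpw]; exact hp)
    have hZmax : IsMaxPieceSuffix rels w Z := by
      refine ⟨hNZ_piece, List.drop_suffix _ _, fun p hp hpw => ?_⟩
      rw [hZlen]
      exact Nat.le_findGreatest hpw.length_le
        (by rw [← List.suffix_iff_eq_drop.mp hpw]; exact hp)
    have hP₁X : P₁.length ≤ NX := hXlen ▸ hXmax.2.2 P₁ hP₁ (htake1 ▸ List.take_prefix _ _)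
    have hP₃Z : P₃.length ≤ NZ := hZlen ▸ hZmax.2.2 P₃ hP₃ (hdrop3 ▸ List.drop_suffix _ _)
    -- overlap case: w is a product of two pieces, contradiction with C(3)
    by_cases hov : w.length ≤ NX + NZ
    · have hsZ : w.drop NX <:+ Z := by
        have : w.drop NX = Z.drop (NX - (w.length - NZ)) := by
          rw [hZdef, List.drop_drop]
          congr 1
          omega
        rw [this]
        exact List.drop_suffix _ _
      have hspiece : IsPiece rels (w.drop NX) := IsPiece.of_infix hNZ_piece hsZ.isInfix
      exact h3 w hw [X, w.drop NX] (by rintro p hp; simp at hp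
                                       rcases hp with h | h <;> subst h
                                       exacts [hNX_piece, hspiece])
        (by simp) (by simp [hXdef, List.take_append_drop])
    -- main case
    push_neg at hov
    set Y := (w.drop NX).take (w.length - NZ - NX) with hYdef
    have hdecomp : w = X ++ Y ++ Z := by
      rw [List.append_assoc, hXdef, hYdef, hZdef]
      have h1 : List.drop (w.length - NZ) w
          = List.drop (w.length - NZ - NX) (List.drop NX w) := by
        rw [List.drop_drop]
        congr 1
        omega
      rw [h1, List.take_append_drop, List.take_append_drop]
    have hP₂eq : P₂ = (w.drop P₁.length).take P₂.length := by
      rw [hwe, List.append_assoc, List.drop_left, List.take_left]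
    have hYP₂ : Y <:+: P₂ := by
      rw [hYdef, hP₂eq]
      exact seg_infix_seg w NX (w.length - NZ - NX) P₁.length P₂.length hP₁X (by omega)
    exact H w X Y Z hw hdecomp hXmax hZmax (IsPiece.of_infix hP₂ hYP₂)
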